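/- For every i ≥ 2, the 3×3 determinant det(x_{i−1}, x_i, x_{i+1}) equals (a − b) or −(a − b); in particular, since a ≠ b, it is nonzero. -/

import Mathlib

/-- The Fibonacci words on the alphabet `{a, b}`:
`w₁ = a`, `w₂ = ab`, `w_i = w_{i-1} w_{i-2}` for `i ≥ 3` (and `w₀ = ε`). -/
def fibWord {α : Type*} (a b : α) : ℕ → List α
  | 0 => []
  | 1 => [a]
  | 2 => [a, b]
  | n + 3 => fibWord a b (n + 2) ++ fibWord a b (n + 1)

/-- `fibMat a b i` is the symmetric matrix `M_i = Φ(m_i)`, the image under the monoid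
morphism `Φ` (sending the letter `a` to `((a,1),(1,0))` and `b` to `((b,1),(1,0))`)
of the palindrome `m_i`, i.e. of the word `w_{i+2}` deprived of its last two letters. -/
def fibMat {A : Type*} [CommRing A] (a b : A) (i : ℕ) : Matrix (Fin 2) (Fin 2) A :=
  (((fibWord a b (i + 2)).dropLast.dropLast).map (fun c => !![c, 1; 1, 0])).prod

/-- The triple `x_i = (x_{i,0}, x_{i,1}, x_{i,2}) ∈ A³` of entries of the symmetric
matrix `M_i = ((x_{i,0}, x_{i,1}), (x_{i,1}, x_{i,2}))`. -/
def fibTriple {A : Type*} [CommRing A] (a b : A) (i : ℕ) : Fin 3 → A :=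
  ![fibMat a b i 0 0, fibMat a b i 0 1, fibMat a b i 1 1]

/-!
Since `w_{n+2} w_{n+1}` and `w_{n+1} w_{n+2}` differ only in the order of their last two
letters, `m_{n+1} = w_{n+1} m_n`, hence `M_{n+1} = Φ(w_{n+1}) M_n`. With `Z = Φ(w_{n+3})`
this gives `M_{n+2} = Z M_n` and `M_{n+3} = Z M_{n+2}`, so by Cayley–Hamilton
`M_{n+3} = tr Z • M_{n+2} - det Z • M_n`, where `det Z = ±1`. Consequently the determinant
of three consecutive triples `x_n, x_{n+1}, x_{n+2}` only changes sign from one `n` to the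
next, and for `n = 0` (where `M_0` is the identity) it equals `b - a`.
-/

open Matrix

namespace Matrix

variable {A : Type*} [CommRing A]

lemma mul_self_fin_two (Z : Matrix (Fin 2) (Fin 2) A) :
    Z * Z = Z.trace • Z - Z.det • 1 := by
  ext i j
  fin_cases i <;> fin_cases j <;> simp [mul_apply, trace_fin_two, det_fin_two] <;> ring

lemma eq_trace_smul_sub_det_smul_of_eq_mul {Z N P Q : Matrix (Fin 2) (Fin 2) A}
    (hP : P = Z * N) (hQ : Q = Z * P) : Q = Z.trace • P - Z.det • N := by
  rw [hQ, hP, ← Matrix.mul_assoc, mul_self_fin_two, sub_mul, smul_mul, smul_mul, one_mul]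

lemma det_of_rows_sub_smul (u v w : Fin 3 → A) (t d : A) :
    det (of ![v, w, t • w - d • u]) = -d * det (of ![u, v, w]) := by
  simp [det_fin_three]
  ring

end Matrix

section WordMat

variable {A : Type*} [CommRing A]

/-- The morphism `Φ` on words. -/
def wordMat (l : List A) : Matrix (Fin 2) (Fin 2) A :=
  (l.map fun c => !![c, 1; 1, 0]).prod

lemma wordMat_append (u v : List A) : wordMat (u ++ v) = wordMat u * wordMat v := by
  simp [wordMat]

lemma det_wordMat (l : List A) : (wordMat l).det = (-1) ^ l.length := by
  induction l with
  | nil => simp [wordMat]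
  | cons c l ih =>
    rw [show wordMat (c :: l) = !![c, 1; 1, 0] * wordMat l by simp [wordMat], det_mul, ih,
      det_fin_two_of, List.length_cons, pow_succ]
    ring

end WordMat

section FibWord

variable {α : Type*} (a b : α)

lemma fibWord_add_three (n : ℕ) :
    fibWord a b (n + 3) = fibWord a b (n + 2) ++ fibWord a b (n + 1) := rfl

lemma exists_fibWord_append_swap (n : ℕ) : ∃ (u : List α) (x y : α),
    fibWord a b (n + 2) ++ fibWord a b (n + 1) = u ++ [x, y] ∧
    fibWord a b (n + 1) ++ fibWord a b (n + 2) = u ++ [y, x] := by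
  induction n with
  | zero => exact ⟨[a], b, a, rfl, rfl⟩
  | succ n ih =>
    obtain ⟨u, x, y, h₁, h₂⟩ := ih
    refine ⟨fibWord a b (n + 2) ++ u, y, x, ?_, ?_⟩
    · rw [fibWord_add_three, List.append_assoc, h₂, List.append_assoc]
    · rw [fibWord_add_three, h₁, ← List.append_assoc]

lemma two_le_length_fibWord (n : ℕ) : 2 ≤ (fibWord a b (n + 2)).length := by
  induction n with
  | zero => simp [fibWord]
  | succ n ih =>
    rw [fibWord_add_three, List.length_append]
    omega

lemma dropLast_dropLast_fibWord_add_three (n : ℕ) :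
    (fibWord a b (n + 3)).dropLast.dropLast
      = fibWord a b (n + 1) ++ (fibWord a b (n + 2)).dropLast.dropLast := by
  obtain ⟨u, x, y, h₁, h₂⟩ := exists_fibWord_append_swap a b n
  have hlen := two_le_length_fibWord a b n
  have hne : fibWord a b (n + 2) ≠ [] := List.ne_nil_of_length_pos (by omega)
  have hne' : (fibWord a b (n + 2)).dropLast ≠ [] :=
    List.ne_nil_of_length_pos (by rw [List.length_dropLast]; omega)
  calc (fibWord a b (n + 3)).dropLast.dropLast = u := by simp [fibWord_add_three, h₁]
    _ = (fibWord a b (n + 1) ++ fibWord a b (n + 2)).dropLast.dropLast := by simp [h₂]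
    _ = fibWord a b (n + 1) ++ (fibWord a b (n + 2)).dropLast.dropLast := by
      rw [List.dropLast_append_of_ne_nil hne, List.dropLast_append_of_ne_nil hne']

end FibWord

section FibMat

variable {A : Type*} [CommRing A] (a b : A)

lemma fibMat_succ (n : ℕ) : fibMat a b (n + 1) = wordMat (fibWord a b (n + 1)) * fibMat a b n := by
  rw [fibMat, dropLast_dropLast_fibWord_add_three, List.map_append, List.prod_append]
  rfl

lemma fibMat_add_two (n : ℕ) :
    fibMat a b (n + 2) = wordMat (fibWord a b (n + 3)) * fibMat a b n := by
  rw [fibMat_succ, fibMat_succ, fibWord_add_three, wordMat_append, Matrix.mul_assoc]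

lemma exists_fibMat_add_three (n : ℕ) : ∃ (t : A) (k : ℕ),
    fibMat a b (n + 3) = t • fibMat a b (n + 2) - ((-1) ^ k : A) • fibMat a b n := by
  have h := eq_trace_smul_sub_det_smul_of_eq_mul (fibMat_add_two a b n) (fibMat_succ a b (n + 2))
  rw [det_wordMat] at h
  exact ⟨_, _, h⟩

lemma exists_fibTriple_add_three (n : ℕ) : ∃ (t : A) (k : ℕ),
    fibTriple a b (n + 3) = t • fibTriple a b (n + 2) - ((-1) ^ k : A) • fibTriple a b n := by
  obtain ⟨t, k, h⟩ := exists_fibMat_add_three a b n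
  refine ⟨t, k, funext fun j => ?_⟩
  fin_cases j <;> simp only [fibTriple, h, Matrix.sub_apply, Matrix.smul_apply] <;> rfl

end FibMat

section FibDet

variable {A : Type*} [CommRing A] (a b : A)

def fibDet (n : ℕ) : A :=
  det (of ![fibTriple a b n, fibTriple a b (n + 1), fibTriple a b (n + 2)])

lemma fibDet_zero : fibDet a b 0 = -(a - b) := by
  have m₀ : fibMat a b 0 = 1 := by simp [fibMat, fibWord]
  simp [fibDet, fibTriple, fibMat_succ a b 1, fibMat_succ a b 0, m₀, wordMat, fibWord,
    det_fin_three]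
  ring

lemma exists_fibDet_succ (n : ℕ) : ∃ k : ℕ, fibDet a b (n + 1) = (-1) ^ k * fibDet a b n := by
  obtain ⟨t, k, h⟩ := exists_fibTriple_add_three a b n
  refine ⟨k + 1, ?_⟩
  rw [fibDet, h, det_of_rows_sub_smul, fibDet, pow_succ]
  ring

lemma exists_fibDet_eq (n : ℕ) : ∃ k : ℕ, fibDet a b n = (-1) ^ k * (a - b) := by
  induction n with
  | zero => exact ⟨1, by rw [fibDet_zero]; ring⟩
  | succ n ih =>
    obtain ⟨k, hk⟩ := ih
    obtain ⟨l, hl⟩ := exists_fibDet_succ a b n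
    exact ⟨l + k, by rw [hl, hk, pow_add, mul_assoc]⟩

end FibDet

theorem fib_det_eq_pm_sub
    {A : Type*} [CommRing A]
    (a b : A) (hab : a ≠ b) :
    ∀ i : ℕ, 2 ≤ i →
      (Matrix.det (Matrix.of
          ![fibTriple a b (i - 1), fibTriple a b i, fibTriple a b (i + 1)]) = a - b ∨
       Matrix.det (Matrix.of
          ![fibTriple a b (i - 1), fibTriple a b i, fibTriple a b (i + 1)]) = -(a - b)) ∧
      Matrix.det (Matrix.of
          ![fibTriple a b (i - 1), fibTriple a b i, fibTriple a b (i + 1)]) ≠ 0 := by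
  intro i hi
  obtain ⟨j, rfl⟩ : ∃ j, i = j + 1 := ⟨i - 1, by omega⟩
  obtain ⟨k, hk⟩ := exists_fibDet_eq a b j
  change (fibDet a b j = _ ∨ fibDet a b j = _) ∧ fibDet a b j ≠ 0
  rcases neg_one_pow_eq_or A k with h | h <;> simp [hk, h, sub_eq_zero, hab, hab.symm]
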